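/- arXiv:1109.0489 — 2 statements merged into one kernel-verified Lean document; each statement's English description precedes it below -/
import Mathlib

section
/- Let T be an N×N real orthogonal matrix, let σ_1 ≥ σ_2 ≥ ... ≥ σ_N ≥ 0, and define η_i = Σ_{j=1}^N T_{ij}² σ_j. Let X̃ = (X̃_1, ..., X̃_N) be a vector of independent centered Gaussian random variables with variances E[X̃_i²] = η_i, and let Y = (Y_1, ..., Y_N) be a vector of independent centered Gaussian random variables with variances E[Y_i²] = σ_i. Then for every convex, permutation-symmetric function φ : R^N → R, E[ φ(X̃_1², ..., X̃_N²) ] ≤ E[ φ(Y_1², ..., Y_N²) ]. -/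
/-! Squares of independent centered Gaussians with variances `τ` are jointly distributed as
`τ * y`, where `y` has i.i.d. `χ²₁` coordinates; so both sides are integrals of `φ (τ * y)`
against one exchangeable law. The vector `η` is `M *ᵥ σ` with `M = (T i j ^ 2)` doubly
stochastic, hence by Birkhoff a convex combination of the permuted vectors `σ ∘ π`. Jensen bounds
`φ (η * y)` by the same combination of the `φ ((σ ∘ π) * y)`, and each of these has the integral
of `φ (σ * y)` because `φ` is symmetric and the law exchangeable. -/

open MeasureTheory ProbabilityTheory
open scoped NNReal Matrix

section Matrix

variable {n : Type*} [Fintype n] [DecidableEq n]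

lemma Matrix.of_sq_mem_doublyStochastic {T : Matrix n n ℝ} (hT : Tᵀ * T = 1) :
    Matrix.of (fun i j => T i j ^ 2) ∈ doublyStochastic ℝ n := by
  have hT' : T * Tᵀ = 1 := mul_eq_one_comm.mp hT
  refine mem_doublyStochastic_iff_sum.2 ⟨fun i j => sq_nonneg _, fun i => ?_, fun j => ?_⟩
  · simpa [Matrix.mul_apply, Matrix.one_apply, sq] using congrFun (congrFun hT' i) i
  · simpa [Matrix.mul_apply, Matrix.one_apply, sq] using congrFun (congrFun hT j) j

lemma exists_mulVec_eq_sum_comp_perm_of_mem_doublyStochastic {R : Type*}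
    [Field R] [LinearOrder R] [IsStrictOrderedRing R] {M : Matrix n n R}
    (hM : M ∈ doublyStochastic R n) :
    ∃ w : Equiv.Perm n → R, (∀ π, 0 ≤ w π) ∧ ∑ π, w π = 1 ∧
      ∀ v : n → R, M *ᵥ v = ∑ π, w π • (v ∘ π) := by
  obtain ⟨w, hw0, hw1, hwM⟩ := exists_eq_sum_perm_of_mem_doublyStochastic hM
  refine ⟨w, hw0, hw1, fun v => ?_⟩
  rw [← hwM, Matrix.sum_mulVec]
  simp only [Matrix.smul_mulVec, Matrix.permMatrix_mulVec]

end Matrix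

section Exchangeable

variable {ι α : Type*} [MeasurableSpace α]

lemma MeasurableEquiv.coe_piCongrLeft_symm_perm (π : Equiv.Perm ι) :
    ⇑(MeasurableEquiv.piCongrLeft (fun _ => α) π.symm) = fun y : ι → α => y ∘ π := by
  ext y i
  simpa using MeasurableEquiv.piCongrLeft_apply_apply (β := fun _ => α) π.symm y (π i)

lemma measurableEmbedding_comp_perm (π : Equiv.Perm ι) :
    MeasurableEmbedding (fun y : ι → α => y ∘ π) :=
  MeasurableEquiv.coe_piCongrLeft_symm_perm (α := α) π ▸
    (MeasurableEquiv.piCongrLeft (fun _ => α) π.symm).measurableEmbedding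

lemma measurePreserving_comp_perm_pi [Fintype ι] (μ : Measure α) [SigmaFinite μ]
    (π : Equiv.Perm ι) :
    MeasurePreserving (fun y : ι → α => y ∘ π) (Measure.pi fun _ => μ) (Measure.pi fun _ => μ) :=
  MeasurableEquiv.coe_piCongrLeft_symm_perm (α := α) π ▸
    measurePreserving_piCongrLeft (fun _ => μ) π.symm

variable {ν : Measure (ι → ℝ)} {φ : (ι → ℝ) → ℝ}

lemma comp_mul_comp_perm_eq (hφ : ∀ (π : Equiv.Perm ι) (x : ι → ℝ), φ (x ∘ π) = φ x)
    (σ : ι → ℝ) (π : Equiv.Perm ι) :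
    (fun y => φ ((σ ∘ π) * y)) = (fun y => φ (σ * y)) ∘ (· ∘ π.symm) := by
  ext y
  rw [Function.comp_apply, ← hφ π (σ * (y ∘ π.symm))]
  congr 1
  ext i
  simp

lemma integrable_comp_mul_comp_perm_iff
    (hν : ∀ π : Equiv.Perm ι, MeasurePreserving (· ∘ π) ν ν)
    (hφ : ∀ (π : Equiv.Perm ι) (x : ι → ℝ), φ (x ∘ π) = φ x) (σ : ι → ℝ) (π : Equiv.Perm ι) :
    Integrable (fun y => φ ((σ ∘ π) * y)) ν ↔ Integrable (fun y => φ (σ * y)) ν := by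
  rw [comp_mul_comp_perm_eq hφ σ π]
  exact (hν π.symm).integrable_comp_emb (measurableEmbedding_comp_perm π.symm)

lemma integral_comp_mul_comp_perm
    (hν : ∀ π : Equiv.Perm ι, MeasurePreserving (· ∘ π) ν ν)
    (hφ : ∀ (π : Equiv.Perm ι) (x : ι → ℝ), φ (x ∘ π) = φ x) (σ : ι → ℝ) (π : Equiv.Perm ι) :
    ∫ y, φ ((σ ∘ π) * y) ∂ν = ∫ y, φ (σ * y) ∂ν := by
  rw [comp_mul_comp_perm_eq hφ σ π]
  exact (hν π.symm).integral_comp (measurableEmbedding_comp_perm π.symm) fun y => φ (σ * y)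

theorem ConvexOn.integral_comp_mulVec_mul_le_of_mem_doublyStochastic [Fintype ι] [DecidableEq ι]
    (hconv : ConvexOn ℝ Set.univ φ) (hν : ∀ π : Equiv.Perm ι, MeasurePreserving (· ∘ π) ν ν)
    (hφ : ∀ (π : Equiv.Perm ι) (x : ι → ℝ), φ (x ∘ π) = φ x) {M : Matrix ι ι ℝ}
    (hM : M ∈ doublyStochastic ℝ ι) (σ : ι → ℝ)
    (hMσ : Integrable (fun y => φ ((M *ᵥ σ) * y)) ν) (hσ : Integrable (fun y => φ (σ * y)) ν) :
    ∫ y, φ ((M *ᵥ σ) * y) ∂ν ≤ ∫ y, φ (σ * y) ∂ν := by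
  obtain ⟨w, hw0, hw1, hwM⟩ := exists_mulVec_eq_sum_comp_perm_of_mem_doublyStochastic hM
  have jensen (y : ι → ℝ) : φ ((M *ᵥ σ) * y) ≤ ∑ π, w π * φ ((σ ∘ π) * y) := by
    simpa [hwM, Finset.sum_mul, smul_mul_assoc] using
      hconv.map_sum_le (fun π _ => hw0 π) hw1 fun π _ => Set.mem_univ ((σ ∘ π) * y)
  have hint (π : Equiv.Perm ι) : Integrable (fun y => w π * φ ((σ ∘ π) * y)) ν :=
    ((integrable_comp_mul_comp_perm_iff hν hφ σ π).2 hσ).const_mul _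
  calc ∫ y, φ ((M *ᵥ σ) * y) ∂ν ≤ ∫ y, ∑ π, w π * φ ((σ ∘ π) * y) ∂ν :=
        integral_mono hMσ (integrable_finsetSum _ fun π _ => hint π) jensen
    _ = ∑ π, w π * ∫ y, φ ((σ ∘ π) * y) ∂ν := by
        rw [integral_finsetSum _ fun π _ => hint π]
        simp_rw [integral_const_mul]
    _ = ∫ y, φ (σ * y) ∂ν := by
        simp_rw [integral_comp_mul_comp_perm hν hφ, ← Finset.sum_mul, hw1, one_mul]

end Exchangeable

lemma gaussianReal_map_sq (v : ℝ≥0) :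
    (gaussianReal 0 v).map (· ^ 2) = ((gaussianReal 0 1).map (· ^ 2)).map ((v : ℝ) * ·) := by
  have hscale : (gaussianReal 0 1).map (√v * ·) = gaussianReal 0 v := by
    rw [gaussianReal_map_const_mul]
    congr 1
    · simp
    · ext; simp
  rw [← hscale, Measure.map_map (by fun_prop) (by fun_prop),
    Measure.map_map (by fun_prop) (by fun_prop)]
  congr 1
  ext x
  simp [mul_pow]

lemma ProbabilityTheory.iIndepFun.identDistrib_sq_of_map_eq_gaussianReal {Ω ι : Type*}
    [MeasurableSpace Ω] [Fintype ι] {P : Measure Ω} {Z : ι → Ω → ℝ} (hindep : iIndepFun Z P)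
    (τ : ι → ℝ≥0) (hmeas : ∀ i, AEMeasurable (Z i) P)
    (hlaw : ∀ i, P.map (Z i) = gaussianReal 0 (τ i)) :
    IdentDistrib (fun ω i => Z i ω ^ 2) (fun y => (fun i => (τ i : ℝ)) * y) P
      (Measure.pi fun _ => (gaussianReal 0 1).map (· ^ 2)) where
  aemeasurable_fst := by fun_prop
  aemeasurable_snd := by fun_prop
  map_eq := by
    have := hindep.isProbabilityMeasure
    rw [(hindep.comp (fun _ x => x ^ 2) fun _ => measurable_id.pow_const 2).map_fun_eq_pi_map
      fun i => (hmeas i).pow_const 2]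
    change _ = (Measure.pi _).map (fun y i => (τ i : ℝ) * y i)
    rw [Measure.pi_map_pi (fun _ => by fun_prop)]
    congr with i : 1
    rw [← gaussianReal_map_sq, ← hlaw, AEMeasurable.map_map_of_aemeasurable (by fun_prop) (hmeas i)]
    rfl

theorem marshall_proschan_gaussian_general {Ω : Type*} [MeasureSpace Ω]
    (N : ℕ) (T : Matrix (Fin N) (Fin N) ℝ) (hT : T.transpose * T = 1)
    (σ : Fin N → ℝ≥0)
    (η : Fin N → ℝ≥0) (hη : ∀ i, (η i : ℝ) = ∑ j, T i j ^ 2 * (σ j : ℝ))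
    (Xt : Fin N → Ω → ℝ) (hXtmeas : ∀ i, Measurable (Xt i))
    (hXtindep : iIndepFun Xt ℙ)
    (hXtgauss : ∀ i, Measure.map (Xt i) ℙ = gaussianReal 0 (η i))
    (Y : Fin N → Ω → ℝ) (hYmeas : ∀ i, Measurable (Y i))
    (hYindep : iIndepFun Y ℙ)
    (hYgauss : ∀ i, Measure.map (Y i) ℙ = gaussianReal 0 (σ i))
    (φ : (Fin N → ℝ) → ℝ) (hφconv : ConvexOn ℝ Set.univ φ)
    (hφsymm : ∀ (e : Equiv.Perm (Fin N)) (x : Fin N → ℝ), φ (x ∘ e) = φ x)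
    (hXtint : Integrable (fun ω => φ (fun i => (Xt i ω) ^ 2)) ℙ)
    (hYint : Integrable (fun ω => φ (fun i => (Y i ω) ^ 2)) ℙ) :
    ∫ ω, φ (fun i => (Xt i ω) ^ 2) ∂ℙ ≤ ∫ ω, φ (fun i => (Y i ω) ^ 2) ∂ℙ := by
  have hφmeas : Measurable φ := (continuousOn_univ.mp (hφconv.continuousOn isOpen_univ)).measurable
  have hησ : (fun i => (η i : ℝ)) = Matrix.of (fun i j => T i j ^ 2) *ᵥ fun j => (σ j : ℝ) := by
    ext i
    simp [hη, Matrix.mulVec, dotProduct]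
  have hX := (hXtindep.identDistrib_sq_of_map_eq_gaussianReal η
    (fun i => (hXtmeas i).aemeasurable) hXtgauss).comp hφmeas
  have hY := (hYindep.identDistrib_sq_of_map_eq_gaussianReal σ
    (fun i => (hYmeas i).aemeasurable) hYgauss).comp hφmeas
  rw [hησ] at hX
  calc _ = _ := hX.integral_eq
    _ ≤ _ := hφconv.integral_comp_mulVec_mul_le_of_mem_doublyStochastic
        (measurePreserving_comp_perm_pi _) hφsymm (Matrix.of_sq_mem_doublyStochastic hT) _
        (hX.integrable_iff.1 hXtint) (hY.integrable_iff.1 hYint)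
    _ = _ := hY.integral_eq.symm

/-- **Marshall–Proschan comparison.** Let `T` be an `N × N` real
orthogonal matrix, `σ_1 ≥ σ_2 ≥ … ≥ σ_N ≥ 0`, and `η_i = ∑ j, T_{ij}² σ_j`.
Let `X̃` be independent centered Gaussians with variances `η_i` and `Y`
independent centered Gaussians with variances `σ_i`. Then for every convex,
permutation-symmetric `φ : ℝ^N → ℝ`,
`E[φ(X̃_1², …, X̃_N²)] ≤ E[φ(Y_1², …, Y_N²)]`. -/
theorem marshall_proschan_gaussian {Ω : Type*} [MeasureSpace Ω]
    [IsProbabilityMeasure (ℙ : Measure Ω)]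
    (N : ℕ) (T : Matrix (Fin N) (Fin N) ℝ) (hT : T.transpose * T = 1)
    (σ : Fin N → ℝ≥0) (hσ : Antitone σ)
    (η : Fin N → ℝ≥0) (hη : ∀ i, (η i : ℝ) = ∑ j, T i j ^ 2 * (σ j : ℝ))
    (Xt : Fin N → Ω → ℝ) (hXtmeas : ∀ i, Measurable (Xt i))
    (hXtindep : iIndepFun Xt ℙ)
    (hXtgauss : ∀ i, Measure.map (Xt i) ℙ = gaussianReal 0 (η i))
    (Y : Fin N → Ω → ℝ) (hYmeas : ∀ i, Measurable (Y i))
    (hYindep : iIndepFun Y ℙ)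
    (hYgauss : ∀ i, Measure.map (Y i) ℙ = gaussianReal 0 (σ i))
    (φ : (Fin N → ℝ) → ℝ) (hφconv : ConvexOn ℝ Set.univ φ)
    (hφsymm : ∀ (e : Equiv.Perm (Fin N)) (x : Fin N → ℝ), φ (x ∘ e) = φ x)
    (hXtint : Integrable (fun ω => φ (fun i => (Xt i ω) ^ 2)) ℙ)
    (hYint : Integrable (fun ω => φ (fun i => (Y i ω) ^ 2)) ℙ) :
    ∫ ω, φ (fun i => (Xt i ω) ^ 2) ∂ℙ ≤ ∫ ω, φ (fun i => (Y i ω) ^ 2) ∂ℙ :=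
  marshall_proschan_gaussian_general N T hT σ η hη Xt hXtmeas hXtindep hXtgauss Y hYmeas hYindep
    hYgauss φ hφconv hφsymm hXtint hYint
end

section
/- Let T be an N×N real orthogonal matrix, let σ_1 ≥ σ_2 ≥ ... ≥ σ_N ≥ 0, and define η_i = Σ_{j=1}^N T_{ij}² σ_j. Let X̃ = (X̃_1, ..., X̃_N) be a vector of independent centered Gaussian random variables with variances E[X̃_i²] = η_i, and let Y = (Y_1, ..., Y_N) be a vector of independent centered Gaussian random variables with variances E[Y_i²] = σ_i. Then for every M with 1 ≤ M ≤ N, E[ φ_M(X̃) ] ≤ E[ φ_M(Y) ], where φ_M(x) = max over choices of M distinct indices i_1, ..., i_M of Σ_{j=1}^M x_{i_j}². -/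
open MeasureTheory ProbabilityTheory
open scoped NNReal ENNReal

/-! Writing a centered Gaussian vector with variances `v` as `√v * Z` for a standard Gaussian
vector `Z`, we get `φ_M(√v * Z) = topSum M (v * Z ^ 2)`, a maximum of linear functions of `v`.
Hence `gaussianTopSum M v = E φ_M(√v * Z)` is a convex function of `v`, and it is invariant under
permutations of `v`. Orthogonality of `T` makes `(T i j ^ 2)` doubly stochastic, so by Birkhoff's
theorem `η` is a convex combination of rearrangements of `σ`, and Jensen's inequality concludes. -/

open Finset
open scoped Matrix

section TopSum

variable {ι : Type*} {M : ℕ}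

/-- `φ_M x = topSum M (x ^ 2)`. When `M` exceeds the number of coordinates the supremum is over an
empty type and takes the junk value `0`. -/
noncomputable def topSum (M : ℕ) (x : ι → ℝ) : ℝ :=
  ⨆ s : {s : Finset ι // s.card = M}, ∑ i ∈ s.1, x i

lemma sum_le_topSum [Finite ι] (x : ι → ℝ) (s : {s : Finset ι // s.card = M}) :
    ∑ i ∈ s.1, x i ≤ topSum M x :=
  le_ciSup (f := fun s : {s : Finset ι // s.card = M} => ∑ i ∈ s.1, x i)
    (Set.finite_range _).bddAbove s

lemma abs_topSum_le [Fintype ι] (x : ι → ℝ) : |topSum M x| ≤ ∑ i, |x i| := by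
  have hsum : ∀ s : {s : Finset ι // s.card = M}, |∑ i ∈ s.1, x i| ≤ ∑ i, |x i| := fun s =>
    (abs_sum_le_sum_abs x s.1).trans
      (sum_le_sum_of_subset_of_nonneg (subset_univ _) fun i _ _ => abs_nonneg _)
  rcases isEmpty_or_nonempty {s : Finset ι // s.card = M} with h | h
  · rw [topSum, Real.iSup_of_isEmpty, abs_zero]
    positivity
  exact abs_le.2 ⟨(abs_le.1 (hsum h.some)).1.trans (sum_le_topSum x h.some),
    ciSup_le fun t => (abs_le.1 (hsum t)).2⟩

lemma convexOn_topSum [Finite ι] : ConvexOn ℝ Set.univ (topSum M : (ι → ℝ) → ℝ) := by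
  refine ⟨convex_univ, fun x _ y _ a b ha hb _ => ?_⟩
  rcases isEmpty_or_nonempty {s : Finset ι // s.card = M} with h | h
  · simp [topSum, Real.iSup_of_isEmpty]
  refine ciSup_le fun s => ?_
  simp only [Pi.add_apply, Pi.smul_apply, smul_eq_mul, sum_add_distrib, ← mul_sum]
  gcongr <;> exact sum_le_topSum _ s

lemma topSum_comp_perm (x : ι → ℝ) (e : Equiv.Perm ι) : topSum M (x ∘ e) = topSum M x := by
  let E : {s : Finset ι // s.card = M} ≃ {s : Finset ι // s.card = M} :=
    e.finsetCongr.subtypeEquiv fun s => by simp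
  unfold topSum
  conv_rhs => rw [← E.iSup_comp]
  congr! 1 with s
  simp [E, Equiv.finsetCongr_apply, sum_map]

lemma measurable_topSum [Finite ι] : Measurable (topSum M : (ι → ℝ) → ℝ) :=
  Measurable.iSup fun _ => Finset.measurable_sum _ fun i _ => measurable_pi_apply i

end TopSum

section GaussianTopSum

variable {ι : Type*} [Fintype ι] {M : ℕ}

lemma measurePreserving_sqrt_mul_pi_gaussianReal (v : ι → ℝ≥0) :
    MeasurePreserving (fun z i => √(v i) * z i) (Measure.pi fun _ : ι => gaussianReal 0 1)
      (Measure.pi fun i => gaussianReal 0 (v i)) := by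
  refine measurePreserving_pi _ _ fun i => ⟨by fun_prop, ?_⟩
  rw [gaussianReal_map_const_mul, mul_zero, mul_one]
  congr 1
  ext
  simp

noncomputable def gaussianTopSum (M : ℕ) (v : ι → ℝ) : ℝ :=
  ∫ z, topSum M (v * z ^ 2) ∂Measure.pi fun _ : ι => gaussianReal 0 1

lemma integrable_topSum_mul_sq (v : ι → ℝ) :
    Integrable (fun z => topSum M (v * z ^ 2)) (Measure.pi fun _ : ι => gaussianReal 0 1) := by
  have hsq (i : ι) :
      Integrable (fun z : ι → ℝ => z i ^ 2) (Measure.pi fun _ : ι => gaussianReal 0 1) :=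
    ((measurePreserving_eval _ i).integrable_comp (g := fun x : ℝ => x ^ 2)
      (measurable_id.pow_const 2).aestronglyMeasurable).2 (memLp_id_gaussianReal 2).integrable_sq
  refine Integrable.mono' (g := fun z => ∑ i, |v i| * z i ^ 2)
    (integrable_finsetSum _ fun i _ => (hsq i).const_mul |v i|)
    (measurable_topSum.comp (by fun_prop)).aestronglyMeasurable (ae_of_all _ fun z => ?_)
  refine (Real.norm_eq_abs _ ▸ abs_topSum_le _).trans_eq (sum_congr rfl fun i _ => ?_)
  rw [Pi.mul_apply, Pi.pow_apply, abs_mul, abs_of_nonneg (sq_nonneg (z i))]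

lemma convexOn_gaussianTopSum : ConvexOn ℝ Set.univ (gaussianTopSum M : (ι → ℝ) → ℝ) := by
  refine ⟨convex_univ, fun v _ w _ a b ha hb hab => ?_⟩
  have hpt (z : ι → ℝ) : topSum M ((a • v + b • w) * z ^ 2) ≤
      a * topSum M (v * z ^ 2) + b * topSum M (w * z ^ 2) := by
    rw [add_mul, smul_mul_assoc, smul_mul_assoc]
    exact convexOn_topSum.2 trivial trivial ha hb hab
  calc gaussianTopSum M (a • v + b • w)
      ≤ ∫ z, (a * topSum M (v * z ^ 2) + b * topSum M (w * z ^ 2))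
          ∂Measure.pi fun _ : ι => gaussianReal 0 1 :=
        integral_mono (integrable_topSum_mul_sq _)
          (((integrable_topSum_mul_sq v).const_mul a).add
            ((integrable_topSum_mul_sq w).const_mul b)) hpt
    _ = a • gaussianTopSum M v + b • gaussianTopSum M w := by
        rw [integral_add ((integrable_topSum_mul_sq v).const_mul a)
          ((integrable_topSum_mul_sq w).const_mul b), integral_const_mul, integral_const_mul]
        rfl

lemma gaussianTopSum_comp_perm (v : ι → ℝ) (e : Equiv.Perm ι) :
    gaussianTopSum M (v ∘ e) = gaussianTopSum M v := by
  have hpres := measurePreserving_arrowCongr' (fun _ : ι => gaussianReal 0 1)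
    (fun _ => gaussianReal 0 1) e (MeasurableEquiv.refl ℝ) fun _ => MeasurePreserving.id _
  have hcomp (z : ι → ℝ) : topSum M ((v ∘ e) * z ^ 2) =
      topSum M (v * MeasurableEquiv.arrowCongr' e (MeasurableEquiv.refl ℝ) z ^ 2) := by
    conv_rhs => rw [← topSum_comp_perm _ e]
    congr 1
    ext i
    simp [MeasurableEquiv.arrowCongr', Equiv.arrowCongr']
  simp_rw [gaussianTopSum, hcomp]
  exact hpres.integral_comp' fun z => topSum M (v * z ^ 2)

lemma integral_topSum_sq_eq_gaussianTopSum {Ω : Type*} [MeasurableSpace Ω] {μ : Measure Ω}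
    [IsProbabilityMeasure μ] (M : ℕ) {X : ι → Ω → ℝ} (hX : ∀ i, Measurable (X i))
    (hindep : iIndepFun X μ) {v : ι → ℝ≥0} (hv : ∀ i, μ.map (X i) = gaussianReal 0 (v i)) :
    ∫ ω, topSum M (fun i => X i ω ^ 2) ∂μ = gaussianTopSum M (fun i => (v i : ℝ)) := by
  have hlaw : μ.map (fun ω i => X i ω) = Measure.pi fun i => gaussianReal 0 (v i) := by
    simp_rw [(iIndepFun_iff_map_fun_eq_pi_map fun i => (hX i).aemeasurable).1 hindep, hv]
  have hscale := measurePreserving_sqrt_mul_pi_gaussianReal v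
  have hF : Measurable fun x : ι → ℝ => topSum M (x ^ 2) := measurable_topSum.comp (by fun_prop)
  calc ∫ ω, topSum M (fun i => X i ω ^ 2) ∂μ
      = ∫ x, topSum M (x ^ 2) ∂μ.map (fun ω i => X i ω) :=
        (integral_map (measurable_pi_lambda _ hX).aemeasurable hF.aestronglyMeasurable).symm
    _ = ∫ z, topSum M ((fun i => √(v i) * z i) ^ 2) ∂Measure.pi fun _ : ι => gaussianReal 0 1 := by
        rw [hlaw, ← hscale.map_eq, integral_map hscale.measurable.aemeasurable
          hF.aestronglyMeasurable]
    _ = gaussianTopSum M (fun i => (v i : ℝ)) := by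
        rw [gaussianTopSum]
        congr 1
        ext z
        congr 1
        ext i
        simp [mul_pow]

end GaussianTopSum

lemma hadamard_self_mem_doublyStochastic {n : Type*} [Fintype n] [DecidableEq n]
    {T : Matrix n n ℝ} (hT : Tᵀ * T = 1) : T ⊙ T ∈ doublyStochastic ℝ n := by
  have hT' : T * Tᵀ = 1 := mul_eq_one_comm.mp hT
  refine mem_doublyStochastic_iff_sum.2 ⟨fun i j => mul_self_nonneg _, fun i => ?_, fun j => ?_⟩
  · simpa [Matrix.mul_apply] using congrFun (congrFun hT' i) i
  · simpa [Matrix.mul_apply] using congrFun (congrFun hT j) j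

lemma ConvexOn.apply_mulVec_le_of_mem_doublyStochastic {n : Type*} [Fintype n] [DecidableEq n]
    {f : (n → ℝ) → ℝ} (hf : ConvexOn ℝ Set.univ f)
    (hperm : ∀ (x : n → ℝ) (e : Equiv.Perm n), f (x ∘ e) = f x)
    {P : Matrix n n ℝ} (hP : P ∈ doublyStochastic ℝ n) (x : n → ℝ) : f (P *ᵥ x) ≤ f x := by
  obtain ⟨w, hw0, hw1, rfl⟩ := exists_eq_sum_perm_of_mem_doublyStochastic hP
  calc f ((∑ e, w e • e.permMatrix ℝ) *ᵥ x) = f (∑ e, w e • (x ∘ e)) := by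
        simp [Matrix.sum_mulVec, Matrix.smul_mulVec, Matrix.permMatrix_mulVec]
    _ ≤ ∑ e, w e • f (x ∘ e) := hf.map_sum_le (fun e _ => hw0 e) hw1 fun _ _ => trivial
    _ = f x := by simp only [hperm, smul_eq_mul, ← sum_mul, hw1, one_mul]

theorem marshall_proschan_phiM_general {Ω : Type*} [MeasureSpace Ω]
    [IsProbabilityMeasure (ℙ : Measure Ω)]
    (N : ℕ) (T : Matrix (Fin N) (Fin N) ℝ) (hT : T.transpose * T = 1)
    (σ : Fin N → ℝ≥0)
    (η : Fin N → ℝ≥0) (hη : ∀ i, (η i : ℝ) = ∑ j, T i j ^ 2 * (σ j : ℝ))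
    (Xt : Fin N → Ω → ℝ) (hXtmeas : ∀ i, Measurable (Xt i))
    (hXtindep : iIndepFun Xt ℙ)
    (hXtgauss : ∀ i, Measure.map (Xt i) ℙ = gaussianReal 0 (η i))
    (Y : Fin N → Ω → ℝ) (hYmeas : ∀ i, Measurable (Y i))
    (hYindep : iIndepFun Y ℙ)
    (hYgauss : ∀ i, Measure.map (Y i) ℙ = gaussianReal 0 (σ i))
    (M : ℕ) :
    ∫ ω, (⨆ s : {s : Finset (Fin N) // s.card = M}, ∑ i ∈ s.1, (Xt i ω) ^ 2) ∂ℙ ≤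
      ∫ ω, (⨆ s : {s : Finset (Fin N) // s.card = M}, ∑ i ∈ s.1, (Y i ω) ^ 2) ∂ℙ := by
  have hηT : (fun i => (η i : ℝ)) = (T ⊙ T) *ᵥ fun j => (σ j : ℝ) := by
    ext i
    simp [hη, Matrix.mulVec, dotProduct, sq]
  change ∫ ω, topSum M (fun i => Xt i ω ^ 2) ∂ℙ ≤ ∫ ω, topSum M (fun i => Y i ω ^ 2) ∂ℙ
  rw [integral_topSum_sq_eq_gaussianTopSum M hXtmeas hXtindep hXtgauss,
    integral_topSum_sq_eq_gaussianTopSum M hYmeas hYindep hYgauss, hηT]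
  exact convexOn_gaussianTopSum.apply_mulVec_le_of_mem_doublyStochastic gaussianTopSum_comp_perm
    (hadamard_self_mem_doublyStochastic hT) _

/-- Let `T` be an `N × N` real orthogonal matrix,
`σ_1 ≥ σ_2 ≥ … ≥ σ_N ≥ 0`, and `η_i = ∑ j, T_{ij}² σ_j`. Let `X̃` be
independent centered Gaussians with variances `η_i` and `Y` independent
centered Gaussians with variances `σ_i`. Then for every `1 ≤ M ≤ N`,
`E[φ_M(X̃)] ≤ E[φ_M(Y)]`, where `φ_M(x)` is the largest sum of squares of `M`
distinct coordinates of `x`. -/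
theorem marshall_proschan_phiM {Ω : Type*} [MeasureSpace Ω]
    [IsProbabilityMeasure (ℙ : Measure Ω)]
    (N : ℕ) (T : Matrix (Fin N) (Fin N) ℝ) (hT : T.transpose * T = 1)
    (σ : Fin N → ℝ≥0) (hσ : Antitone σ)
    (η : Fin N → ℝ≥0) (hη : ∀ i, (η i : ℝ) = ∑ j, T i j ^ 2 * (σ j : ℝ))
    (Xt : Fin N → Ω → ℝ) (hXtmeas : ∀ i, Measurable (Xt i))
    (hXtindep : iIndepFun Xt ℙ)
    (hXtgauss : ∀ i, Measure.map (Xt i) ℙ = gaussianReal 0 (η i))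
    (Y : Fin N → Ω → ℝ) (hYmeas : ∀ i, Measurable (Y i))
    (hYindep : iIndepFun Y ℙ)
    (hYgauss : ∀ i, Measure.map (Y i) ℙ = gaussianReal 0 (σ i))
    (M : ℕ) (hM1 : 1 ≤ M) (hMN : M ≤ N) :
    ∫ ω, (⨆ s : {s : Finset (Fin N) // s.card = M}, ∑ i ∈ s.1, (Xt i ω) ^ 2) ∂ℙ ≤
      ∫ ω, (⨆ s : {s : Finset (Fin N) // s.card = M}, ∑ i ∈ s.1, (Y i ω) ^ 2) ∂ℙ :=
  marshall_proschan_phiM_general N T hT σ η hη Xt hXtmeas hXtindep hXtgauss Y hYmeas hYindep hYgauss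
    M
end
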